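/- Second tropical duality (Theorem 1.2, identity (1.8)): assume the global sign-coherence hypothesis. Then for every n×n skew-symmetrizable integer matrix B and every finite sequence w = (k_1,…,k_m) of indices in {1,…,n}, one has C^B(w) · C^{-B^B(w)}(rev w) = I, where rev w = (k_m,…,k_1) is the reversed sequence; i.e. C^B(w) is invertible with inverse C^{-B^B(w)}(rev w). -/

import Mathlib

open Matrix

/-- Entrywise positive part `[B]₊`. -/
def matPos {n : ℕ} (B : Matrix (Fin n) (Fin n) ℤ) : Matrix (Fin n) (Fin n) ℤ :=
  fun i j => max (B i j) 0

/-- `B^{k•}` : the matrix `B` with all entries outside row `k` set to zero. -/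
def rowR {n : ℕ} (B : Matrix (Fin n) (Fin n) ℤ) (k : Fin n) : Matrix (Fin n) (Fin n) ℤ :=
  fun i j => if i = k then B i j else 0

/-- `B^{•k}` : the matrix `B` with all entries outside column `k` set to zero. -/
def colR {n : ℕ} (B : Matrix (Fin n) (Fin n) ℤ) (k : Fin n) : Matrix (Fin n) (Fin n) ℤ :=
  fun i j => if j = k then B i j else 0

/-- `J_k` : the identity matrix with its `(k,k)` entry replaced by `-1`. -/
def Jmat (n : ℕ) (k : Fin n) : Matrix (Fin n) (Fin n) ℤ :=
  Matrix.diagonal (fun i => if i = k then -1 else 1)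

/-- Matrix mutation `μ_k(B)`. -/
def mutB {n : ℕ} (B : Matrix (Fin n) (Fin n) ℤ) (k : Fin n) : Matrix (Fin n) (Fin n) ℤ :=
  fun i j =>
    if i = k ∨ j = k then -B i j
    else B i j + max (B i k) 0 * max (B k j) 0 - max (-B i k) 0 * max (-B k j) 0

/-- Mutation of the `C`-matrix in direction `l`, where `B` is the current exchange matrix. -/
def mutC {n : ℕ} (B C : Matrix (Fin n) (Fin n) ℤ) (l : Fin n) : Matrix (Fin n) (Fin n) ℤ :=
  fun i j =>
    if j = l then -C i j
    else C i j + max (C i l) 0 * max (B l j) 0 - max (-C i l) 0 * max (-B l j) 0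

/-- One step of the simultaneous `(B, C, G)` recursion with initial exchange matrix `B0`. -/
def BCGstep {n : ℕ} (B0 : Matrix (Fin n) (Fin n) ℤ)
    (p : Matrix (Fin n) (Fin n) ℤ × Matrix (Fin n) (Fin n) ℤ × Matrix (Fin n) (Fin n) ℤ)
    (l : Fin n) :
    Matrix (Fin n) (Fin n) ℤ × Matrix (Fin n) (Fin n) ℤ × Matrix (Fin n) (Fin n) ℤ :=
  (mutB p.1 l, mutC p.1 p.2.1 l,
    p.2.2 * (Jmat n l + colR (matPos p.1) l) - B0 * colR (matPos p.2.1) l)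

/-- The triple `(B_m, C_m, G_m)` obtained from `(B0, I, I)` by mutating along the word `w`. -/
def BCG {n : ℕ} (B0 : Matrix (Fin n) (Fin n) ℤ) (w : List (Fin n)) :
    Matrix (Fin n) (Fin n) ℤ × Matrix (Fin n) (Fin n) ℤ × Matrix (Fin n) (Fin n) ℤ :=
  w.foldl (BCGstep B0) (B0, 1, 1)

/-- `B^B(w)` : the exchange matrix at the end of the word `w`. -/
def Bmat {n : ℕ} (B0 : Matrix (Fin n) (Fin n) ℤ) (w : List (Fin n)) : Matrix (Fin n) (Fin n) ℤ :=
  (BCG B0 w).1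

/-- `C^B(w)` : the matrix of c-vectors at the end of the word `w`. -/
def Cmat {n : ℕ} (B0 : Matrix (Fin n) (Fin n) ℤ) (w : List (Fin n)) : Matrix (Fin n) (Fin n) ℤ :=
  (BCG B0 w).2.1

/-- `G^B(w)` : the matrix of g-vectors at the end of the word `w`. -/
def Gmat {n : ℕ} (B0 : Matrix (Fin n) (Fin n) ℤ) (w : List (Fin n)) : Matrix (Fin n) (Fin n) ℤ :=
  (BCG B0 w).2.2

/-- `B` is skew-symmetrized by the diagonal matrix with (positive) diagonal entries `d`,
i.e. `Bᵀ = -D B D⁻¹`, stated integrally as `Bᵀ D = -(D B)`. -/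
def SkewSymmBy {n : ℕ} (B : Matrix (Fin n) (Fin n) ℤ) (d : Fin n → ℤ) : Prop :=
  (∀ i, 0 < d i) ∧ Bᵀ * Matrix.diagonal d = -(Matrix.diagonal d * B)

/-- `B` is skew-symmetrizable. -/
def SkewSymmetrizable {n : ℕ} (B : Matrix (Fin n) (Fin n) ℤ) : Prop :=
  ∃ d : Fin n → ℤ, SkewSymmBy B d

/-- Every column of `C` has all entries nonnegative or all entries nonpositive. -/
def SignCoherent {n : ℕ} (C : Matrix (Fin n) (Fin n) ℤ) : Prop :=
  ∀ j, (∀ i, 0 ≤ C i j) ∨ (∀ i, C i j ≤ 0)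

/-- The global sign-coherence hypothesis in rank `n`: all C-matrices of all cluster patterns
of rank `n` are sign-coherent. -/
def GlobalSC (n : ℕ) : Prop :=
  ∀ B' : Matrix (Fin n) (Fin n) ℤ, SkewSymmetrizable B' →
    ∀ w' : List (Fin n), SignCoherent (Cmat B' w')

/-- The sign `ε_j(C)` of the `j`-th column of a sign-coherent matrix `C`:
`-1` if column `j` contains a negative entry, `1` otherwise. -/
def epsCol {n : ℕ} (C : Matrix (Fin n) (Fin n) ℤ) (j : Fin n) : ℤ :=
  if ∃ i, C i j < 0 then -1 else 1

/-!
Under sign-coherence every mutation acts on C-matrices by right multiplication with an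
involution, `C^B(w ++ [l]) = C^B(w) E_ε(B^B(w), l)` with `ε` the sign of the `l`-th column, and on
G-matrices by `F_{-ε}`; since `F_{-ε}ᵀ D = D E_ε`, this gives the first duality `Gᵀ D C = D`.

The second duality is proved jointly with the change of initial seed
`C^B(l :: u) = E_σ(B, l) C^{μ_l B}(u)`, by induction on the length of the word. Duality for
`l :: u` follows from the seed change for `u` by cancelling the involution `E_σ`. The seed change
passes from `u` to `u ++ [j]` because left multiplication by `E_σ(B, l)` only alters row `l`, so
all relevant column signs are unchanged, unless the `j`-th column of `C^{μ_l B}(u)` is `±e_l`. In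
that case the first duality for the word and for its reverse forces the `l`-th row of the
G-matrix to be `±e_j`, so the `l`-th row of `B C^{μ_l B}(u)` is `∓` the `j`-th row of the final
exchange matrix, which is exactly what makes the two sides agree.
-/

lemma max_mul_max_sub_max_neg_mul_max_neg {s : ℤ} (hs : s = 1 ∨ s = -1) (x y : ℤ) :
    max x 0 * max y 0 - max (-x) 0 * max (-y) 0 = x * max (s * y) 0 + max (-s * x) 0 * y := by
  rcases hs with rfl | rfl <;> rcases le_total x 0 with hx | hx <;>
    rcases le_total y 0 with hy | hy <;> simp [hx, hy]

section

variable {n : ℕ}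

lemma rowR_mul (X M : Matrix (Fin n) (Fin n) ℤ) (l : Fin n) :
    rowR X l * M = rowR (X * M) l := by
  ext i j
  by_cases h : i = l <;> simp [mul_apply, rowR, h]

lemma mul_colR (X M : Matrix (Fin n) (Fin n) ℤ) (l : Fin n) :
    M * colR X l = colR (M * X) l := by
  ext i j
  by_cases h : j = l <;> simp [mul_apply, colR, h]

lemma mul_rowR (X M : Matrix (Fin n) (Fin n) ℤ) (l : Fin n) :
    M * rowR X l = vecMulVec (fun i => M i l) (X l) := by
  ext i j
  simp [mul_apply, rowR, vecMulVec_apply]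

lemma colR_mul (X M : Matrix (Fin n) (Fin n) ℤ) (l : Fin n) :
    colR X l * M = vecMulVec (fun i => X i l) (M l) := by
  ext i j
  simp [mul_apply, colR, vecMulVec_apply]

lemma Jmat_mul_self (l : Fin n) : Jmat n l * Jmat n l = 1 := by
  rw [Jmat, diagonal_mul_diagonal, ← diagonal_one]
  congr 1
  funext i
  split_ifs <;> norm_num

lemma Jmat_add_rowR_mul_self {X : Matrix (Fin n) (Fin n) ℤ} {l : Fin n} (h : X l l = 0) :
    (Jmat n l + rowR X l) * (Jmat n l + rowR X l) = 1 := by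
  have hJR : Jmat n l * rowR X l = -rowR X l := by
    ext i j; by_cases hi : i = l <;> simp [Jmat, diagonal_mul, rowR, hi]
  have hRJ : rowR X l * Jmat n l = rowR X l := by
    ext i j
    by_cases hj : j = l <;> by_cases hi : i = l <;> simp [Jmat, mul_diagonal, rowR, hi, hj, h]
  have hRR : rowR X l * rowR X l = 0 := by
    ext i j; by_cases hi : i = l <;> simp [mul_rowR, rowR, vecMulVec_apply, hi, h]
  rw [add_mul, mul_add, mul_add, Jmat_mul_self, hJR, hRJ, hRR]
  abel

lemma Jmat_add_colR_mul_self {X : Matrix (Fin n) (Fin n) ℤ} {l : Fin n} (h : X l l = 0) :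
    (Jmat n l + colR X l) * (Jmat n l + colR X l) = 1 := by
  have hJC : Jmat n l * colR X l = colR X l := by
    ext i j
    by_cases hj : j = l <;> by_cases hi : i = l <;> simp [Jmat, diagonal_mul, colR, hi, hj, h]
  have hCJ : colR X l * Jmat n l = -colR X l := by
    ext i j; by_cases hj : j = l <;> simp [Jmat, mul_diagonal, colR, hj]
  have hCC : colR X l * colR X l = 0 := by
    ext i j; by_cases hj : j = l <;> simp [colR_mul, colR, vecMulVec_apply, hj, h]
  rw [add_mul, mul_add, mul_add, Jmat_mul_self, hJC, hCJ, hCC]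
  abel

def Emat (B : Matrix (Fin n) (Fin n) ℤ) (l : Fin n) (s : ℤ) : Matrix (Fin n) (Fin n) ℤ :=
  Jmat n l + rowR (matPos (s • B)) l

def Fmat (B : Matrix (Fin n) (Fin n) ℤ) (l : Fin n) (s : ℤ) : Matrix (Fin n) (Fin n) ℤ :=
  Jmat n l + colR (matPos (s • B)) l

variable {B : Matrix (Fin n) (Fin n) ℤ} {l : Fin n}

lemma Emat_mul_self (s : ℤ) (h : B l l = 0) : Emat B l s * Emat B l s = 1 :=
  Jmat_add_rowR_mul_self (by simp [matPos, h, -zsmul_eq_mul])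

lemma Fmat_mul_self (s : ℤ) (h : B l l = 0) : Fmat B l s * Fmat B l s = 1 :=
  Jmat_add_colR_mul_self (by simp [matPos, h, -zsmul_eq_mul])

lemma Emat_mul_apply_of_ne (M : Matrix (Fin n) (Fin n) ℤ) (s : ℤ) {i : Fin n} (j : Fin n)
    (hi : i ≠ l) : (Emat B l s * M) i j = M i j := by
  simp [Emat, add_mul, Jmat, diagonal_mul, rowR_mul, rowR, hi]

lemma Emat_mul_apply_self_of_col {M : Matrix (Fin n) (Fin n) ℤ} {j : Fin n} (s : ℤ)
    (h : B l l = 0) (hM : ∀ i, i ≠ l → M i j = 0) : (Emat B l s * M) l j = -M l j := by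
  rw [mul_apply, Finset.sum_eq_single l (fun t _ ht => by rw [hM t ht, mul_zero])
    (by simp)]
  simp [Emat, Jmat, rowR, matPos, h, -zsmul_eq_mul]

lemma mul_Emat_apply (M : Matrix (Fin n) (Fin n) ℤ) (s : ℤ) (i j : Fin n) :
    (M * Emat B l s) i j = M i j * (if j = l then -1 else 1) + M i l * max (s * B l j) 0 := by
  simp [Emat, mul_add, Jmat, mul_diagonal, mul_rowR, vecMulVec_apply, matPos, -zsmul_eq_mul]

lemma Emat_eq_Emat_neg_add (s : ℤ) : Emat B l s = Emat B l (-s) + s • rowR B l := by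
  ext i j
  by_cases hi : i = l
  · simp only [Emat, hi, Matrix.add_apply, rowR, ↓reduceIte, matPos, Matrix.smul_apply,
      Int.zsmul_eq_mul, neg_smul, Matrix.neg_apply]
    linear_combination max_zero_sub_max_neg_zero_eq_self (s * B l j)
  · simp [Emat, rowR, hi, -zsmul_eq_mul]

lemma Emat_neg_left (s : ℤ) : Emat (-B) l s = Emat B l (-s) := by
  ext i j
  by_cases hi : i = l <;> simp [Emat, rowR, matPos, hi, -zsmul_eq_mul]

lemma Emat_mutB (s : ℤ) : Emat (mutB B l) l s = Emat B l (-s) := by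
  ext i j
  by_cases hi : i = l <;> simp [Emat, rowR, matPos, hi, mutB, -zsmul_eq_mul]

lemma mutB_eq_Fmat_mul_mul_Emat {s : ℤ} (hs : s = 1 ∨ s = -1) (h : B l l = 0) :
    mutB B l = Fmat B l (-s) * B * Emat B l s := by
  have hFB : ∀ i j, (Fmat B l (-s) * B) i j
      = (if i = l then -1 else 1) * B i j + max (-s * B i l) 0 * B l j := by
    intro i j
    simp [Fmat, add_mul, Jmat, diagonal_mul, colR_mul, vecMulVec_apply, matPos, -zsmul_eq_mul]
  ext i j
  rw [mul_Emat_apply, hFB, hFB, h, mul_zero, add_zero]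
  by_cases hi : i = l <;> by_cases hj : j = l
  · simp [mutB, hi, hj, h]
  · simp [mutB, hi, hj, h]
  · simp [mutB, hi, hj, h]
  · simp only [mutB, hi, hj, or_self, if_false, one_mul, mul_one]
    linear_combination max_mul_max_sub_max_neg_mul_max_neg hs (B i l) (B l j)

lemma mutC_eq_mul_Emat {C : Matrix (Fin n) (Fin n) ℤ} {s : ℤ} (hs : s = 1 ∨ s = -1)
    (h : B l l = 0) (hC : ∀ i, 0 ≤ s * C i l) : mutC B C l = C * Emat B l s := by
  ext i j
  rw [mul_Emat_apply]
  by_cases hj : j = l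
  · simp [mutC, hj, h]
  · have := hC i
    rcases hs with rfl | rfl <;> simp_all [mutC]

end

section

variable {n : ℕ} {B : Matrix (Fin n) (Fin n) ℤ} {d : Fin n → ℤ}

lemma SkewSymmBy.apply (hB : SkewSymmBy B d) (i j : Fin n) : d j * B j i = -(d i * B i j) := by
  simpa [mul_diagonal, diagonal_mul, mul_comm] using congrFun (congrFun hB.2 i) j

lemma SkewSymmBy.apply_self (hB : SkewSymmBy B d) (i : Fin n) : B i i = 0 := by
  have : d i * B i i = 0 := by linarith [hB.apply i i]
  exact (mul_eq_zero.1 this).resolve_left (hB.1 i).ne'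

lemma SkewSymmBy.neg (hB : SkewSymmBy B d) : SkewSymmBy (-B) d :=
  ⟨hB.1, by rw [transpose_neg, Matrix.neg_mul, hB.2, Matrix.mul_neg]⟩

lemma SkewSymmBy.mul_max_apply (hB : SkewSymmBy B d) (s : ℤ) (i j : Fin n) :
    d j * max (s * B j i) 0 = d i * max (-s * B i j) 0 := by
  rw [mul_max_of_nonneg _ _ (hB.1 j).le, mul_max_of_nonneg _ _ (hB.1 i).le, mul_zero, mul_zero]
  congr 1
  linear_combination s * hB.apply i j

lemma SkewSymmBy.Fmat_transpose_mul_diagonal (hB : SkewSymmBy B d) (l : Fin n) (s : ℤ) :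
    (Fmat B l s)ᵀ * diagonal d = diagonal d * Emat B l (-s) := by
  ext i j
  by_cases hi : i = l <;> by_cases hj : j = l
  · simp [Fmat, Emat, Jmat, colR, rowR, matPos, hi, hj, hB.apply_self l, mul_diagonal,
      diagonal_mul, -zsmul_eq_mul]
  · subst hi
    simp [Fmat, Emat, Jmat, colR, rowR, matPos, Ne.symm hj, mul_diagonal, diagonal_mul,
      -zsmul_eq_mul, mul_comm, hB.mul_max_apply s i j]
  · simp [Fmat, Emat, Jmat, colR, rowR, hi, hj, mul_diagonal, diagonal_mul]
  · by_cases hij : i = j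
    · subst hij; simp [Fmat, Emat, Jmat, colR, rowR, hi, mul_diagonal, diagonal_mul, mul_comm]
    · simp [Fmat, Emat, Jmat, colR, rowR, hi, hij, mul_diagonal, diagonal_mul]

lemma SkewSymmBy.mutB (hB : SkewSymmBy B d) (l : Fin n) : SkewSymmBy (mutB B l) d := by
  have hE : (Emat B l 1)ᵀ * diagonal d = diagonal d * Fmat B l (-1) := by
    simpa using (congrArg transpose (hB.Fmat_transpose_mul_diagonal l (-1))).symm
  refine ⟨hB.1, ?_⟩
  rw [mutB_eq_Fmat_mul_mul_Emat (Or.inl rfl) (hB.apply_self l)]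
  calc (Fmat B l (-1) * B * Emat B l 1)ᵀ * diagonal d
      = (Emat B l 1)ᵀ * (Bᵀ * ((Fmat B l (-1))ᵀ * diagonal d)) := by
        simp only [transpose_mul, Matrix.mul_assoc]
    _ = -((Emat B l 1)ᵀ * diagonal d * B * Emat B l 1) := by
        rw [hB.Fmat_transpose_mul_diagonal, neg_neg, ← Matrix.mul_assoc Bᵀ, hB.2]
        simp only [Matrix.neg_mul, Matrix.mul_neg, Matrix.mul_assoc]
    _ = -(diagonal d * (Fmat B l (-1) * B * Emat B l 1)) := by
        rw [hE]; simp only [Matrix.mul_assoc]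

end

section

variable {n : ℕ}

lemma mutB_neg (B : Matrix (Fin n) (Fin n) ℤ) (l : Fin n) : mutB (-B) l = -mutB B l := by
  ext i j
  by_cases h : i = l ∨ j = l
  · simp [mutB, h]
  · simp only [mutB, h, ↓reduceIte, Matrix.neg_apply, neg_neg]
    ring

lemma mutB_mutB (B : Matrix (Fin n) (Fin n) ℤ) (l : Fin n) : mutB (mutB B l) l = B := by
  ext i j
  by_cases h : i = l ∨ j = l
  · simp [mutB, h]
  · simp [mutB, not_or.1 h]

variable (B0 : Matrix (Fin n) (Fin n) ℤ)

lemma foldl_BCGstep_fst (w : List (Fin n))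
    (p : Matrix (Fin n) (Fin n) ℤ × Matrix (Fin n) (Fin n) ℤ × Matrix (Fin n) (Fin n) ℤ) :
    (w.foldl (BCGstep B0) p).1 = w.foldl mutB p.1 := by
  induction w generalizing p with
  | nil => rfl
  | cons l u ih => exact ih _

@[simp] lemma Bmat_nil : Bmat B0 [] = B0 := rfl

@[simp] lemma Cmat_nil : Cmat B0 [] = 1 := rfl

@[simp] lemma Gmat_nil : Gmat B0 [] = 1 := rfl

lemma Bmat_cons (l : Fin n) (w : List (Fin n)) : Bmat B0 (l :: w) = Bmat (mutB B0 l) w := by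
  simp only [Bmat, BCG, List.foldl_cons, foldl_BCGstep_fst]
  rfl

lemma Bmat_append_singleton (w : List (Fin n)) (l : Fin n) :
    Bmat B0 (w ++ [l]) = mutB (Bmat B0 w) l := by
  simp [Bmat, BCG, List.foldl_append, BCGstep]

lemma Cmat_append_singleton (w : List (Fin n)) (l : Fin n) :
    Cmat B0 (w ++ [l]) = mutC (Bmat B0 w) (Cmat B0 w) l := by
  simp [Cmat, Bmat, BCG, List.foldl_append, BCGstep]

lemma Gmat_append_singleton (w : List (Fin n)) (l : Fin n) :
    Gmat B0 (w ++ [l]) = Gmat B0 w * (Jmat n l + colR (matPos (Bmat B0 w)) l)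
      - B0 * colR (matPos (Cmat B0 w)) l := by
  simp [Gmat, Cmat, Bmat, BCG, List.foldl_append, BCGstep]

lemma Bmat_neg (w : List (Fin n)) : Bmat (-B0) w = -Bmat B0 w := by
  induction w generalizing B0 with
  | nil => rfl
  | cons l u ih => rw [Bmat_cons, Bmat_cons, mutB_neg, ih]

lemma Bmat_Bmat_reverse (w : List (Fin n)) : Bmat (Bmat B0 w) w.reverse = B0 := by
  induction w generalizing B0 with
  | nil => rfl
  | cons l u ih => rw [Bmat_cons, List.reverse_cons, Bmat_append_singleton, ih, mutB_mutB]

lemma SkewSymmBy.Bmat {B0 : Matrix (Fin n) (Fin n) ℤ} {d : Fin n → ℤ} (hB : SkewSymmBy B0 d)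
    (w : List (Fin n)) : SkewSymmBy (Bmat B0 w) d := by
  induction w using List.reverseRecOn with
  | nil => exact hB
  | append_singleton w l ih => rw [Bmat_append_singleton]; exact ih.mutB l

end

section

variable {n : ℕ}

lemma epsCol_eq_one_or_neg_one (C : Matrix (Fin n) (Fin n) ℤ) (j : Fin n) :
    epsCol C j = 1 ∨ epsCol C j = -1 := by
  unfold epsCol; split_ifs <;> simp

lemma SignCoherent.epsCol_mul_nonneg {C : Matrix (Fin n) (Fin n) ℤ} (hC : SignCoherent C)
    (i j : Fin n) : 0 ≤ epsCol C j * C i j := by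
  unfold epsCol
  split_ifs with h
  · obtain ⟨k, hk⟩ := h
    have := (hC j).resolve_left fun hpos => (hpos k).not_gt hk
    linarith [this i]
  · push Not at h
    linarith [h i]

lemma SignCoherent.epsCol_eq_sign {C : Matrix (Fin n) (Fin n) ℤ} (hC : SignCoherent C)
    {i j : Fin n} (h : C i j ≠ 0) : epsCol C j = (C i j).sign := by
  rcases (epsCol_eq_one_or_neg_one C j) with hε | hε <;>
    have := hC.epsCol_mul_nonneg i j <;> rw [hε] at this ⊢
  · rw [Int.sign_eq_one_of_pos (by omega)]
  · rw [Int.sign_eq_neg_one_of_neg (by omega)]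

variable {B0 : Matrix (Fin n) (Fin n) ℤ} {w : List (Fin n)} {l : Fin n}

lemma Cmat_append_singleton_eq_mul_Emat (hsc : SignCoherent (Cmat B0 w))
    (h0 : Bmat B0 w l l = 0) :
    Cmat B0 (w ++ [l]) = Cmat B0 w * Emat (Bmat B0 w) l (epsCol (Cmat B0 w) l) := by
  rw [Cmat_append_singleton]
  exact mutC_eq_mul_Emat (epsCol_eq_one_or_neg_one _ _) h0 fun i => hsc.epsCol_mul_nonneg i l

lemma Gmat_append_singleton_eq_mul_Fmat (hsc : SignCoherent (Cmat B0 w))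
    (hK : B0 * Cmat B0 w = Gmat B0 w * Bmat B0 w) :
    Gmat B0 (w ++ [l]) = Gmat B0 w * Fmat (Bmat B0 w) l (-epsCol (Cmat B0 w) l) := by
  have hsign := fun i => hsc.epsCol_mul_nonneg i l
  rw [Gmat_append_singleton]
  rcases epsCol_eq_one_or_neg_one (Cmat B0 w) l with hε | hε <;> rw [hε] at hsign ⊢
  · have hcol : colR (matPos (Cmat B0 w)) l = colR (Cmat B0 w) l := by
      ext i j
      by_cases hj : j = l
      · simp [colR, matPos, hj, max_eq_left (by simpa using hsign i)]
      · simp [colR, hj]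
    rw [hcol, mul_colR, hK, ← mul_colR, ← Matrix.mul_sub, Fmat, add_sub_assoc]
    congr 2
    ext i j
    by_cases hj : j = l
    · simp only [hj, Matrix.sub_apply, colR, ↓reduceIte, matPos, Matrix.smul_apply,
        Int.zsmul_eq_mul, neg_mul, one_mul]
      linarith [max_zero_sub_max_neg_zero_eq_self (Bmat B0 w i l)]
    · simp [colR, hj]
  · have hcol : colR (matPos (Cmat B0 w)) l = 0 := by
      ext i j
      by_cases hj : j = l
      · simp [colR, matPos, hj, max_eq_right (by simpa using hsign i)]
      · simp [colR, hj]
    simp [hcol, Fmat]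

end

section

variable {n : ℕ} {B0 : Matrix (Fin n) (Fin n) ℤ} {d : Fin n → ℤ}

lemma mul_Cmat_eq_Gmat_mul_Bmat (hB : SkewSymmBy B0 d) (hsc : ∀ w, SignCoherent (Cmat B0 w))
    (w : List (Fin n)) : B0 * Cmat B0 w = Gmat B0 w * Bmat B0 w := by
  induction w using List.reverseRecOn with
  | nil => simp
  | append_singleton w l ih =>
    have h0 := (hB.Bmat w).apply_self l
    rw [Cmat_append_singleton_eq_mul_Emat (hsc w) h0, Gmat_append_singleton_eq_mul_Fmat (hsc w) ih,
      Bmat_append_singleton, mutB_eq_Fmat_mul_mul_Emat (epsCol_eq_one_or_neg_one (Cmat B0 w) l) h0]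
    set ε := epsCol (Cmat B0 w) l
    calc B0 * (Cmat B0 w * Emat (Bmat B0 w) l ε)
        = Gmat B0 w * (Fmat (Bmat B0 w) l (-ε) * Fmat (Bmat B0 w) l (-ε)) * Bmat B0 w
            * Emat (Bmat B0 w) l ε := by
          rw [Fmat_mul_self _ h0, Matrix.mul_one, ← ih, Matrix.mul_assoc]
      _ = _ := by simp only [Matrix.mul_assoc]

lemma Gmat_transpose_mul_diagonal_mul_Cmat (hB : SkewSymmBy B0 d)
    (hsc : ∀ w, SignCoherent (Cmat B0 w)) (w : List (Fin n)) :
    (Gmat B0 w)ᵀ * diagonal d * Cmat B0 w = diagonal d := by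
  induction w using List.reverseRecOn with
  | nil => simp
  | append_singleton w l ih =>
    have h0 := (hB.Bmat w).apply_self l
    set ε := epsCol (Cmat B0 w) l
    have hFD := (hB.Bmat w).Fmat_transpose_mul_diagonal l (-ε)
    rw [neg_neg] at hFD
    rw [Cmat_append_singleton_eq_mul_Emat (hsc w) h0,
      Gmat_append_singleton_eq_mul_Fmat (hsc w) (mul_Cmat_eq_Gmat_mul_Bmat hB hsc w)]
    calc (Gmat B0 w * Fmat (Bmat B0 w) l (-ε))ᵀ * diagonal d
          * (Cmat B0 w * Emat (Bmat B0 w) l ε)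
        = (Fmat (Bmat B0 w) l (-ε))ᵀ * ((Gmat B0 w)ᵀ * diagonal d * Cmat B0 w)
            * Emat (Bmat B0 w) l ε := by
          simp only [transpose_mul, Matrix.mul_assoc]
      _ = diagonal d * (Emat (Bmat B0 w) l ε * Emat (Bmat B0 w) l ε) := by
          rw [ih, hFD, Matrix.mul_assoc]
      _ = diagonal d := by rw [Emat_mul_self _ h0, Matrix.mul_one]

end

lemma Int.eq_one_of_mul_eq_of_mul_eq {a b x y : ℤ} (hx : 0 < x) (hy : 0 < y) (ha : a * x = y)
    (hb : b * y = x) : a = 1 := by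
  have hab : a * b = 1 := mul_right_cancel₀ hx.ne' (by linear_combination b * ha + hb)
  rcases Int.eq_one_or_neg_one_of_mul_eq_one' hab with ⟨h, -⟩ | ⟨h, -⟩
  · exact h
  · subst h; linarith

section

variable {ι : Type*} [Fintype ι] [DecidableEq ι]

lemma col_single_of_mul_eq_one {X Y : Matrix ι ι ℤ} (hXY : X * Y = 1) {r k : ι}
    (hY : ∀ i, i ≠ r → Y i k = 0) :
    (∀ i, i ≠ k → X i r = 0) ∧ (Y r k = 1 ∨ Y r k = -1) ∧ X k r = Y r k := by
  have hentry : ∀ i, X i r * Y r k = (1 : Matrix ι ι ℤ) i k := fun i => by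
    rw [← hXY, mul_apply, Finset.sum_eq_single r (fun t _ ht => by rw [hY t ht, mul_zero])
      (by simp)]
  have hkk := hentry k
  rw [one_apply_eq] at hkk
  refine ⟨fun i hi => ?_, ?_⟩
  · have := hentry i
    rw [one_apply_ne hi] at this
    exact (mul_eq_zero.1 this).resolve_right fun h => by simp [h] at hkk
  · rcases Int.eq_one_or_neg_one_of_mul_eq_one' hkk with ⟨h1, h2⟩ | ⟨h1, h2⟩ <;>
      simp [h1, h2]

lemma transpose_mul_diagonal_mul_apply_of_col {R : Type*} [NonUnitalNonAssocSemiring R]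
    {G C : Matrix ι ι R} {d : ι → R} {l j : ι} (hC : ∀ i, i ≠ l → C i j = 0) (s : ι) :
    (Gᵀ * diagonal d * C) s j = G l s * d l * C l j := by
  rw [mul_apply, Finset.sum_eq_single l (fun t _ ht => by rw [hC t ht, mul_zero]) (by simp),
    mul_diagonal, transpose_apply]

end

section

variable {n : ℕ}

lemma SignCoherent.epsCol_Emat_mul {B C C' : Matrix (Fin n) (Fin n) ℤ} {l : Fin n} {s : ℤ}
    (hC : SignCoherent C) (hC' : SignCoherent C') (h : C' = Emat B l s * C) {i j : Fin n}
    (hi : i ≠ l) (hij : C i j ≠ 0) : epsCol C' j = epsCol C j := by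
  have hC'ij : C' i j = C i j := by rw [h, Emat_mul_apply_of_ne _ _ _ hi]
  rw [hC.epsCol_eq_sign hij, hC'.epsCol_eq_sign (hC'ij ▸ hij), hC'ij]

lemma Emat_mul_mul_Emat_neg {B Bu C : Matrix (Fin n) (Fin n) ℤ} {l j : Fin n} {c : ℤ}
    (hBll : B l l = 0) (hBujj : Bu j j = 0)
    (hC : ∀ i, i ≠ l → C i j = 0) (hClj : C l j = c)
    (hrow : ∀ s, (B * C) l s = -(c * Bu j s)) :
    Emat B l c * C * Emat Bu j (-c) = Emat B l (-c) * (C * Emat Bu j c) := by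
  have key : rowR B l * C * Emat Bu j (-c) = Emat B l (-c) * (C * rowR Bu j) := by
    rw [rowR_mul, rowR_mul, ← Matrix.mul_assoc, mul_rowR]
    ext i s
    by_cases hi : i = l
    · subst hi
      simp only [rowR, if_true, vecMulVec_apply]
      rw [Emat_mul_apply_self_of_col _ hBll hC, mul_Emat_apply, hrow, hrow, hBujj, hClj]
      split_ifs with hs
      · simp [hs, hBujj]
      · ring
    · simp [rowR, hi, vecMulVec_apply, Emat_mul_apply_of_ne _ _ _ hi, hC i hi]
  rw [Emat_eq_Emat_neg_add (B := B) c, Emat_eq_Emat_neg_add (B := Bu) c, Matrix.add_mul,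
    Matrix.add_mul, Matrix.mul_add, Matrix.mul_add, smul_mul_assoc, smul_mul_assoc, key,
    Matrix.mul_smul, Matrix.mul_smul, Matrix.mul_assoc]

end

section

variable {n : ℕ}

def CDuality (B : Matrix (Fin n) (Fin n) ℤ) (w : List (Fin n)) : Prop :=
  Cmat B w * Cmat (-Bmat B w) w.reverse = 1

/-- Moving the initial seed from `B` to `μ_l B` multiplies C-matrices by `E_σ(B, l)`, where `σ`
is the sign of the `l`-th column of `(C^{μ_l B}(u))⁻¹ = C^{-B^B(l :: u)}(rev u)`. -/
def CSeedChange (B : Matrix (Fin n) (Fin n) ℤ) (l : Fin n) (u : List (Fin n)) : Prop :=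
  Cmat B (l :: u) = Emat B l (epsCol (Cmat (-Bmat B (l :: u)) u.reverse) l) * Cmat (mutB B l) u

variable (hGSC : GlobalSC n) {B : Matrix (Fin n) (Fin n) ℤ} {d : Fin n → ℤ}
include hGSC

lemma Gmat_row_eq_of_Cmat_col (hB : SkewSymmBy B d) {u : List (Fin n)} (hdual : CDuality B u)
    {l j : Fin n} (hcol : ∀ i, i ≠ l → Cmat B u i j = 0) (s : Fin n) :
    Gmat B u l s = if s = j then Cmat B u l j else 0 := by
  obtain ⟨hCt, hc, hCtjl⟩ := col_single_of_mul_eq_one (mul_eq_one_comm.1 hdual) hcol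
  set c := Cmat B u l j
  have hBt : SkewSymmBy (-Bmat B u) d := (hB.Bmat u).neg
  have hG : ∀ s, Gmat B u l s * d l * c = diagonal d s j := fun s => by
    rw [← transpose_mul_diagonal_mul_apply_of_col hcol,
      Gmat_transpose_mul_diagonal_mul_Cmat hB (hGSC B ⟨d, hB⟩) u]
  have hGt : Gmat (-Bmat B u) u.reverse j l * d j * c = d l := by
    rw [← hCtjl, ← transpose_mul_diagonal_mul_apply_of_col hCt,
      Gmat_transpose_mul_diagonal_mul_Cmat hBt (hGSC _ ⟨d, hBt⟩) _, diagonal_apply_eq]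
  have hc2 : c * c = 1 := by rcases hc with h | h <;> rw [h] <;> norm_num
  have hGc : Gmat B u l j * c = 1 := by
    refine Int.eq_one_of_mul_eq_of_mul_eq (hB.1 l) (hB.1 j) ?_
      (b := Gmat (-Bmat B u) u.reverse j l * c) (by linear_combination hGt)
    linear_combination (hG j).trans (diagonal_apply_eq d j)
  split_ifs with hs
  · subst hs
    linear_combination c * hGc - Gmat B u l s * hc2
  · have hc0 : c ≠ 0 := by rintro h; simp [h] at hc2
    simpa [(hB.1 l).ne', hc0, diagonal_apply_ne d hs] using hG s

end

section

variable {n : ℕ} (hGSC : GlobalSC n) {B : Matrix (Fin n) (Fin n) ℤ} {d : Fin n → ℤ}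
  (hB : SkewSymmBy B d) {l : Fin n} {u : List (Fin n)}
include hGSC hB

lemma CSeedChange.nil : CSeedChange B l [] := by
  have h := Cmat_append_singleton_eq_mul_Emat (hGSC B ⟨d, hB⟩ []) (hB.apply_self l)
  simp only [List.nil_append, Cmat_nil, Bmat_nil, Matrix.one_mul] at h
  simp [CSeedChange, h]

lemma CDuality.cons (hchange : CSeedChange B l u) (hdual : CDuality (mutB B l) u) :
    CDuality B (l :: u) := by
  unfold CDuality at hdual ⊢
  unfold CSeedChange at hchange
  rw [Bmat_cons] at hchange ⊢
  set Bu := Bmat (mutB B l) u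
  set Ct := Cmat (-Bu) u.reverse
  have hBt : SkewSymmBy (-Bu) d := ((hB.mutB l).Bmat u).neg
  have hCt' : Cmat (-Bu) (u.reverse ++ [l]) = Ct * Emat B l (epsCol Ct l) := by
    rw [Cmat_append_singleton_eq_mul_Emat (hGSC _ ⟨d, hBt⟩ _) ((hBt.Bmat _).apply_self l),
      Bmat_neg, Bmat_Bmat_reverse, Emat_neg_left, Emat_mutB, neg_neg]
  rw [List.reverse_cons, hCt', hchange]
  calc Emat B l (epsCol Ct l) * Cmat (mutB B l) u * (Ct * Emat B l (epsCol Ct l))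
      = Emat B l (epsCol Ct l) * (Cmat (mutB B l) u * Ct) * Emat B l (epsCol Ct l) := by
        simp only [Matrix.mul_assoc]
    _ = 1 := by rw [hdual, Matrix.mul_one, Emat_mul_self _ (hB.apply_self l)]

lemma mul_Cmat_mutB_apply_of_col (hdual : CDuality (mutB B l) u) {j : Fin n}
    (hcol : ∀ i, i ≠ l → Cmat (mutB B l) u i j = 0) (s : Fin n) :
    (B * Cmat (mutB B l) u) l s = -(Cmat (mutB B l) u l j * Bmat (mutB B l) u j s) := by
  have hB1 := hB.mutB l
  have hG := Gmat_row_eq_of_Cmat_col hGSC hB1 hdual hcol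
  calc (B * Cmat (mutB B l) u) l s = -((mutB B l * Cmat (mutB B l) u) l s) := by
        simp [mul_apply, mutB, ← Finset.sum_neg_distrib]
    _ = -((Gmat (mutB B l) u * Bmat (mutB B l) u) l s) := by
        rw [mul_Cmat_eq_Gmat_mul_Bmat hB1 (hGSC _ ⟨d, hB1⟩)]
    _ = -(Cmat (mutB B l) u l j * Bmat (mutB B l) u j s) := by
        simp [mul_apply, hG]

end

section

variable {n : ℕ} {B Bu C2 Ct : Matrix (Fin n) (Fin n) ℤ} {l j : Fin n}

lemma Emat_mul_mul_Emat_epsCol_eq (hBll : B l l = 0) (hBujj : Bu j j = 0) (hdual : C2 * Ct = 1)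
    (sc1 : SignCoherent (Emat B l (epsCol Ct l) * C2)) (sc2 : SignCoherent C2)
    (sct : SignCoherent Ct) (sct' : SignCoherent (Emat Bu j (epsCol C2 j) * Ct))
    (hrow : (∀ i, i ≠ l → C2 i j = 0) → ∀ s, (B * C2) l s = -(C2 l j * Bu j s)) :
    Emat B l (epsCol Ct l) * C2 * Emat Bu j (epsCol (Emat B l (epsCol Ct l) * C2) j)
      = Emat B l (epsCol (Emat Bu j (epsCol C2 j) * Ct) l) * (C2 * Emat Bu j (epsCol C2 j)) := by
  by_cases hA : ∃ i, i ≠ l ∧ C2 i j ≠ 0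
  · obtain ⟨i₀, hi₀, hC2i₀⟩ := hA
    obtain ⟨i₁, hi₁, hCti₁⟩ : ∃ i, i ≠ j ∧ Ct i l ≠ 0 := by
      by_contra! h
      exact hC2i₀ ((col_single_of_mul_eq_one hdual h).1 i₀ hi₀)
    rw [sc2.epsCol_Emat_mul sc1 rfl hi₀ hC2i₀, sct.epsCol_Emat_mul sct' rfl hi₁ hCti₁,
      Matrix.mul_assoc]
  · push Not at hA
    obtain ⟨hCt, hc, hCtjl⟩ := col_single_of_mul_eq_one (mul_eq_one_comm.1 hdual) hA
    set c := C2 l j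
    have hc0 : c ≠ 0 := by rcases hc with h | h <;> simp [h]
    have hsign : c.sign = c := by rcases hc with h | h <;> simp [h]
    have hσ : epsCol Ct l = c := by
      rw [sct.epsCol_eq_sign (i := j) (by rwa [hCtjl]), hCtjl, hsign]
    have hC1lj : (Emat B l (epsCol Ct l) * C2) l j = -c := by
      rw [Emat_mul_apply_self_of_col _ hBll hA]
    have hCt'jl : (Emat Bu j (epsCol C2 j) * Ct) j l = -c := by
      rw [Emat_mul_apply_self_of_col _ hBujj hCt, hCtjl]
    have hσ' : epsCol (Emat Bu j (epsCol C2 j) * Ct) l = -c := by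
      rw [sct'.epsCol_eq_sign (i := j) (by simpa [hCt'jl] using hc0), hCt'jl, Int.sign_neg, hsign]
    have hε1 : epsCol (Emat B l (epsCol Ct l) * C2) j = -c := by
      rw [sc1.epsCol_eq_sign (i := l) (by simpa [hC1lj] using hc0), hC1lj, Int.sign_neg, hsign]
    have hε2 : epsCol C2 j = c := by rw [sc2.epsCol_eq_sign (i := l) hc0, hsign]
    rw [hσ', hε1, hε2, hσ]
    exact Emat_mul_mul_Emat_neg hBll hBujj hA rfl (hrow hA)

end

section

variable {n : ℕ} (hGSC : GlobalSC n) {B : Matrix (Fin n) (Fin n) ℤ} {d : Fin n → ℤ}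
  (hB : SkewSymmBy B d) {u : List (Fin n)} {j : Fin n}
include hGSC hB

lemma Cmat_neg_mutB_cons_reverse (hdual : CDuality B u) (hdual' : CDuality B (u ++ [j])) :
    Cmat (-mutB (Bmat B u) j) (j :: u.reverse)
      = Emat (Bmat B u) j (epsCol (Cmat B u) j) * Cmat (-Bmat B u) u.reverse := by
  have h0 := (hB.Bmat u).apply_self j
  unfold CDuality at hdual hdual'
  rw [Bmat_append_singleton, List.reverse_append, List.reverse_singleton,
    List.singleton_append, Cmat_append_singleton_eq_mul_Emat (hGSC B ⟨d, hB⟩ u) h0] at hdual'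
  refine left_inv_eq_right_inv (mul_eq_one_comm.1 hdual') ?_
  rw [Matrix.mul_assoc, ← Matrix.mul_assoc (Emat _ j _), Emat_mul_self _ h0, Matrix.one_mul,
    hdual]

lemma CSeedChange.append_singleton {l : Fin n} (hchange : CSeedChange B l u)
    (hdual : CDuality (mutB B l) u) (hdual' : CDuality (mutB B l) (u ++ [j])) :
    CSeedChange B l (u ++ [j]) := by
  have hB1 := hB.mutB l
  have hBu := hB1.Bmat u
  have hrow := mul_Cmat_mutB_apply_of_col hGSC hB hdual (j := j)
  have hCt' := Cmat_neg_mutB_cons_reverse hGSC hB1 hdual hdual'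
  have hsc' := hGSC _ ⟨d, (hBu.mutB j).neg⟩ (j :: u.reverse)
  have hsc := hGSC B ⟨d, hB⟩ (l :: u)
  have hC1' := Cmat_append_singleton_eq_mul_Emat hsc (l := j)
    (by rw [Bmat_cons]; exact hBu.apply_self j)
  unfold CDuality at hdual
  unfold CSeedChange at hchange ⊢
  rw [Bmat_cons] at hchange hC1'
  rw [← List.cons_append, Bmat_append_singleton, Bmat_cons, List.reverse_append,
    List.reverse_singleton, List.singleton_append, hC1', hCt', hchange,
    Cmat_append_singleton_eq_mul_Emat (hGSC _ ⟨d, hB1⟩ u) (hBu.apply_self j)]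
  rw [hCt'] at hsc'
  rw [hchange] at hsc
  exact Emat_mul_mul_Emat_epsCol_eq (hB.apply_self l) (hBu.apply_self j) hdual hsc
    (hGSC _ ⟨d, hB1⟩ u) (hGSC _ ⟨d, hBu.neg⟩ _) hsc' hrow

end

/-- `CSeedChange` for `u ++ [j]` needs `CDuality` for `u ++ [j]`, which in turn needs
`CSeedChange` for `u`; hence a single induction on the length. -/
lemma cDuality_and_cSeedChange {n : ℕ} (hGSC : GlobalSC n) (m : ℕ) :
    (∀ (w : List (Fin n)) (B : Matrix (Fin n) (Fin n) ℤ),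
      w.length = m → SkewSymmetrizable B → CDuality B w) ∧
    (∀ (u : List (Fin n)) (B : Matrix (Fin n) (Fin n) ℤ) (l : Fin n),
      u.length = m → SkewSymmetrizable B → CSeedChange B l u) := by
  induction m with
  | zero =>
    refine ⟨fun w B hw _ => ?_, fun u B l hu ⟨d, hB⟩ => ?_⟩
    · simp [List.length_eq_zero_iff.1 hw, CDuality]
    · rw [List.length_eq_zero_iff.1 hu]
      exact CSeedChange.nil hGSC hB
  | succ m ih =>
    obtain ⟨ihDual, ihChange⟩ := ih
    have hDual : ∀ (w : List (Fin n)) (B : Matrix (Fin n) (Fin n) ℤ),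
        w.length = m + 1 → SkewSymmetrizable B → CDuality B w := by
      rintro (_ | ⟨l, u⟩) B hw ⟨d, hB⟩
      · simp at hw
      · have hu : u.length = m := by simpa using hw
        exact CDuality.cons hGSC hB (ihChange u B l hu ⟨d, hB⟩)
          (ihDual u _ hu ⟨d, hB.mutB l⟩)
    refine ⟨hDual, fun u' B l hu' ⟨d, hB⟩ => ?_⟩
    obtain rfl | ⟨u, j, rfl⟩ := u'.eq_nil_or_concat
    · simp at hu'
    · rw [List.concat_eq_append] at hu' ⊢
      have hu : u.length = m := by simpa using hu'
      exact CSeedChange.append_singleton hGSC hB (ihChange u B l hu ⟨d, hB⟩)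
        (ihDual u _ hu ⟨d, hB.mutB l⟩) (hDual _ _ hu' ⟨d, hB.mutB l⟩)

/-- second tropical duality: under the global sign-coherence hypothesis,
`C^B(w) · C^{-B^B(w)}(rev w) = I`. -/
theorem tropical_duality_C_C {n : ℕ} (hGSC : GlobalSC n) (B : Matrix (Fin n) (Fin n) ℤ)
    (hB : SkewSymmetrizable B) (w : List (Fin n)) :
    Cmat B w * Cmat (-(Bmat B w)) w.reverse = 1 :=
  (cDuality_and_cSeedChange hGSC w.length).1 w B rfl hB
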